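/- Let D and K̄ be m×m diagonal matrices, D with positive diagonal entries and K̄ with diagonal entries k̄₁,…,k̄ₘ > 0, and let μ > 0. Define ĝ(τ) := maxᵢ |1 - τ k̄ᵢ| + μ τ², let τ̄_s > 0 be the unique positive solution of ĝ(τ̄_s) = 1, let τ̄_o ∈ [0, τ̄_s] be a minimizer of ĝ over [0, τ̄_s], and set ρ := ĝ(τ̄_o) < 1. Let e₀ ∈ ℝᵐ and suppose that for each h = 0, 1, 2, … there is a function y_h : [0, τ̄_o] → ℝᵐ with y_h(0) = e_h and ‖y_h(τ) - (I - τ K̄) e_h‖_{D,2} ≤ μ τ² ‖e_h‖_{D,2} for all τ ∈ [0, τ̄_o], where e_{h+1} := y_h(τ̄_o). Then for all h ≥ 0, ‖e_h‖_{D,2} ≤ ρʰ ‖e₀‖_{D,2}, and moreover ‖y_h(τ)‖_{D,2} ≤ ‖e_h‖_{D,2} for all τ ∈ [0, τ̄_o]. -/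

import Mathlib

/-!
Splitting `y_h(τ) = (I - τK̄)e_h + (y_h(τ) - (I - τK̄)e_h)`, the first term has weighted norm at
most `maxᵢ |1 - τk̄ᵢ| ‖e_h‖_{D,2}` because `D` and `K̄` are diagonal, and the second at most
`μτ²‖e_h‖_{D,2}`; hence `‖y_h(τ)‖_{D,2} ≤ ĝ(τ)‖e_h‖_{D,2}`. At `τ = τ̄_o` this is the contraction
`‖e_{h+1}‖ ≤ ρ‖e_h‖`. For intermediate `τ`, `ĝ` is convex with `ĝ(0) = 1` and `ĝ(τ̄_o) = ρ < 1`,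
so `ĝ ≤ 1` on `[0, τ̄_o]`.
-/

open Finset

theorem ConvexOn.finset_sup' {𝕜 E β ι : Type*} [Semiring 𝕜] [PartialOrder 𝕜]
    [AddCommMonoid E] [SMul 𝕜 E] [AddCommMonoid β] [LinearOrder β] [IsOrderedAddMonoid β]
    [Module 𝕜 β] [PosSMulMono 𝕜 β] {s : Set E} {t : Finset ι} (ht : t.Nonempty)
    {f : ι → E → β} (hf : ∀ i ∈ t, ConvexOn 𝕜 s (f i)) :
    ConvexOn 𝕜 s fun x => t.sup' ht fun i => f i x := by
  refine ⟨(hf _ ht.choose_spec).1, fun x hx y hy a b ha hb hab => sup'_le _ _ fun i hi => ?_⟩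
  calc f i (a • x + b • y) ≤ a • f i x + b • f i y := (hf i hi).2 hx hy ha hb hab
    _ ≤ a • t.sup' ht (fun j => f j x) + b • t.sup' ht (fun j => f j y) := by
      gcongr <;> exact le_sup' (fun j => f j _) hi

theorem convexOn_univ_abs_one_sub_mul (k : ℝ) : ConvexOn ℝ Set.univ fun τ : ℝ => |1 - τ * k| :=
  ((convexOn_univ_norm (E := ℝ)).comp_affineMap (AffineMap.lineMap 1 (1 - k))).congr
    fun τ _ => by
      rw [Function.comp_apply, AffineMap.lineMap_apply_ring', Real.norm_eq_abs]; ring_nf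

section WeightedNorm

variable {ι : Type*} [Fintype ι]

/-- `‖x‖_{D,2}` for `D = diag d`. -/
noncomputable def weightedNorm (d x : ι → ℝ) : ℝ := √(∑ i, (d i * x i) ^ 2)

theorem weightedNorm_eq_norm (d x : ι → ℝ) : weightedNorm d x = ‖WithLp.toLp 2 (d * x)‖ := by
  simp [weightedNorm, EuclideanSpace.norm_eq, mul_pow]

theorem weightedNorm_add_le (d x y : ι → ℝ) :
    weightedNorm d (x + y) ≤ weightedNorm d x + weightedNorm d y := by
  simp only [weightedNorm_eq_norm, mul_add, WithLp.toLp_add]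
  exact norm_add_le _ _

theorem weightedNorm_diag_mul_le {d c x : ι → ℝ} {M : ℝ} (hc : ∀ i, |c i| ≤ M) :
    weightedNorm d (fun i => c i * x i) ≤ M * weightedNorm d x := by
  rcases isEmpty_or_nonempty ι with hι | ⟨⟨i₀⟩⟩
  · simp [weightedNorm]
  have hM : 0 ≤ M := (abs_nonneg _).trans (hc i₀)
  have hterm : ∀ i, (d i * (c i * x i)) ^ 2 ≤ M ^ 2 * (d i * x i) ^ 2 := fun i => by
    rw [show d i * (c i * x i) = c i * (d i * x i) by ring, mul_pow]
    exact mul_le_mul_of_nonneg_right (sq_le_sq' (neg_le_of_abs_le (hc i)) (le_of_abs_le (hc i)))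
      (sq_nonneg _)
  calc weightedNorm d (fun i => c i * x i) ≤ √(∑ i, M ^ 2 * (d i * x i) ^ 2) :=
        Real.sqrt_le_sqrt (sum_le_sum fun i _ => hterm i)
    _ = M * weightedNorm d x := by
        rw [← mul_sum, Real.sqrt_mul (sq_nonneg M), Real.sqrt_sq hM, weightedNorm]

variable [Nonempty ι]

/-- The paper's `ĝ(τ)`. -/
noncomputable def contractionFactor (k : ι → ℝ) (μ τ : ℝ) : ℝ :=
  univ.sup' univ_nonempty (fun i => |1 - τ * k i|) + μ * τ ^ 2

theorem contractionFactor_zero (k : ι → ℝ) (μ : ℝ) : contractionFactor k μ 0 = 1 := by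
  simp [contractionFactor]

theorem contractionFactor_nonneg (k : ι → ℝ) {μ : ℝ} (hμ : 0 ≤ μ) (τ : ℝ) :
    0 ≤ contractionFactor k μ τ := by
  obtain ⟨i⟩ := ‹Nonempty ι›
  have := (abs_nonneg _).trans (le_sup' (fun i => |1 - τ * k i|) (mem_univ i))
  unfold contractionFactor
  positivity

theorem convexOn_contractionFactor (k : ι → ℝ) {μ : ℝ} (hμ : 0 ≤ μ) :
    ConvexOn ℝ Set.univ (contractionFactor k μ) :=
  (ConvexOn.finset_sup' univ_nonempty fun i _ => convexOn_univ_abs_one_sub_mul (k i)).add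
    ((even_two.convexOn_pow).smul hμ)

theorem contractionFactor_le_one_of_mem_Icc {k : ι → ℝ} {μ τ τo : ℝ} (hμ : 0 ≤ μ)
    (hτo : contractionFactor k μ τo ≤ 1) (hτ : τ ∈ Set.Icc 0 τo) :
    contractionFactor k μ τ ≤ 1 := by
  have hseg : τ ∈ segment ℝ 0 τo := by rwa [segment_eq_Icc (hτ.1.trans hτ.2)]
  have := (convexOn_contractionFactor k hμ).le_on_segment (Set.mem_univ 0) (Set.mem_univ τo) hseg
  rw [contractionFactor_zero] at this
  exact this.trans (max_le le_rfl hτo)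

theorem weightedNorm_le_contractionFactor_mul {d k e y : ι → ℝ} {μ τ : ℝ}
    (hrem : weightedNorm d (fun i => y i - (1 - τ * k i) * e i) ≤
      μ * τ ^ 2 * weightedNorm d e) :
    weightedNorm d y ≤ contractionFactor k μ τ * weightedNorm d e := by
  have hlin : weightedNorm d (fun i => (1 - τ * k i) * e i) ≤
      univ.sup' univ_nonempty (fun i => |1 - τ * k i|) * weightedNorm d e :=
    weightedNorm_diag_mul_le fun i => le_sup' (fun i => |1 - τ * k i|) (mem_univ i)
  calc weightedNorm d y
      = weightedNorm d ((fun i => (1 - τ * k i) * e i) + fun i => y i - (1 - τ * k i) * e i) := by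
        congr 1; ext i; simp
    _ ≤ weightedNorm d (fun i => (1 - τ * k i) * e i) +
        weightedNorm d (fun i => y i - (1 - τ * k i) * e i) := weightedNorm_add_le _ _ _
    _ ≤ contractionFactor k μ τ * weightedNorm d e := by
        rw [contractionFactor, add_mul]
        exact add_le_add hlin hrem

end WeightedNorm

theorem stmt_13_general (m : ℕ) [NeZero m] (d k : Fin m → ℝ)
    (μ : ℝ) (hμ : 0 < μ)
    (τs τo ρ : ℝ)
    (hτo : τo ∈ Set.Icc 0 τs)
    (hρ : ρ = Finset.univ.sup' Finset.univ_nonempty (fun i => |1 - τo * k i|) + μ * τo ^ 2)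
    (hρ1 : ρ < 1)
    (e : ℕ → Fin m → ℝ) (y : ℕ → ℝ → Fin m → ℝ)
    (hrem : ∀ h : ℕ, ∀ τ ∈ Set.Icc (0 : ℝ) τo,
      Real.sqrt (∑ i, (d i * (y h τ i - (1 - τ * k i) * e h i)) ^ 2) ≤
        μ * τ ^ 2 * Real.sqrt (∑ i, (d i * e h i) ^ 2))
    (hstep : ∀ h : ℕ, e (h + 1) = y h τo) :
    ∀ h : ℕ,
      Real.sqrt (∑ i, (d i * e h i) ^ 2) ≤ ρ ^ h * Real.sqrt (∑ i, (d i * e 0 i) ^ 2) ∧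
      ∀ τ ∈ Set.Icc (0 : ℝ) τo,
        Real.sqrt (∑ i, (d i * y h τ i) ^ 2) ≤ Real.sqrt (∑ i, (d i * e h i) ^ 2) := by
  have hρg : ρ = contractionFactor k μ τo := hρ
  have hbound (h : ℕ) (τ : ℝ) (hτ : τ ∈ Set.Icc 0 τo) :
      weightedNorm d (y h τ) ≤ contractionFactor k μ τ * weightedNorm d (e h) :=
    weightedNorm_le_contractionFactor_mul (hrem h τ hτ)
  have hcontract (h : ℕ) : weightedNorm d (e (h + 1)) ≤ ρ * weightedNorm d (e h) := by
    rw [hstep, hρg]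
    exact hbound h τo ⟨hτo.1, le_rfl⟩
  have hρ0 : 0 ≤ ρ := hρg ▸ contractionFactor_nonneg k hμ.le τo
  refine fun h => ⟨le_geom (u := fun n => weightedNorm d (e n)) hρ0 h fun j _ => hcontract j,
    fun τ hτ => ?_⟩
  calc weightedNorm d (y h τ) ≤ contractionFactor k μ τ * weightedNorm d (e h) := hbound h τ hτ
    _ ≤ 1 * weightedNorm d (e h) := by
        gcongr
        · exact Real.sqrt_nonneg _
        · exact contractionFactor_le_one_of_mem_Icc hμ.le (hρg ▸ hρ1.le) hτ
    _ = weightedNorm d (e h) := one_mul _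

/-- Proposition 3 of the paper (offline sampled-data strategy): with
`ĝ(τ) = maxᵢ |1 - τ k̄ᵢ| + μτ²`, `τ̄_s > 0` the unique positive solution of `ĝ(τ̄_s) = 1`,
`τ̄_o` a minimizer of `ĝ` over `[0, τ̄_s]` and `ρ = ĝ(τ̄_o) < 1`, if at each step `h` the
intersample trajectory `y_h` starts at `e_h`, satisfies the remainder bound
`‖y_h(τ) - (I - τK̄)e_h‖_{D,2} ≤ μ τ² ‖e_h‖_{D,2}` on `[0, τ̄_o]`, and `e_{h+1} = y_h(τ̄_o)`,
then `‖e_h‖_{D,2} ≤ ρʰ ‖e_0‖_{D,2}` and `‖y_h(τ)‖_{D,2} ≤ ‖e_h‖_{D,2}` on `[0, τ̄_o]`.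
Here `‖x‖_{D,2} = √(∑ i, (dᵢ xᵢ)²)`. -/
theorem stmt_13 (m : ℕ) [NeZero m] (d k : Fin m → ℝ)
    (hd : ∀ i, 0 < d i) (hk : ∀ i, 0 < k i) (μ : ℝ) (hμ : 0 < μ)
    (τs τo ρ : ℝ) (hτs : 0 < τs)
    (hgs : Finset.univ.sup' Finset.univ_nonempty (fun i => |1 - τs * k i|) + μ * τs ^ 2 = 1)
    (hus : ∀ τ : ℝ, 0 < τ →
      Finset.univ.sup' Finset.univ_nonempty (fun i => |1 - τ * k i|) + μ * τ ^ 2 = 1 → τ = τs)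
    (hτo : τo ∈ Set.Icc 0 τs)
    (hmin : ∀ τ ∈ Set.Icc (0 : ℝ) τs,
      Finset.univ.sup' Finset.univ_nonempty (fun i => |1 - τo * k i|) + μ * τo ^ 2 ≤
        Finset.univ.sup' Finset.univ_nonempty (fun i => |1 - τ * k i|) + μ * τ ^ 2)
    (hρ : ρ = Finset.univ.sup' Finset.univ_nonempty (fun i => |1 - τo * k i|) + μ * τo ^ 2)
    (hρ1 : ρ < 1)
    (e : ℕ → Fin m → ℝ) (y : ℕ → ℝ → Fin m → ℝ)
    (hy0 : ∀ h : ℕ, y h 0 = e h)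
    (hrem : ∀ h : ℕ, ∀ τ ∈ Set.Icc (0 : ℝ) τo,
      Real.sqrt (∑ i, (d i * (y h τ i - (1 - τ * k i) * e h i)) ^ 2) ≤
        μ * τ ^ 2 * Real.sqrt (∑ i, (d i * e h i) ^ 2))
    (hstep : ∀ h : ℕ, e (h + 1) = y h τo) :
    ∀ h : ℕ,
      Real.sqrt (∑ i, (d i * e h i) ^ 2) ≤ ρ ^ h * Real.sqrt (∑ i, (d i * e 0 i) ^ 2) ∧
      ∀ τ ∈ Set.Icc (0 : ℝ) τo,
        Real.sqrt (∑ i, (d i * y h τ i) ^ 2) ≤ Real.sqrt (∑ i, (d i * e h i) ^ 2) :=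
  stmt_13_general m d k μ hμ τs τo ρ hτo hρ hρ1 e y hrem hstep
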